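/- arXiv:2007.06764 — 2 statements merged into one kernel-verified Lean document; each statement's English description precedes it below -/
import Mathlib

section
/- Let K > 4 and suppose ρ ∈ (0,1) satisfies ρ ≥ 3/2 − (1/2)√((5K−2)/(K−2)). Then the preemptive-resume revenue function ℛ_PR(φ) = (Kφρ² + (2−K)φ²ρ²(1−ρ)) / (2(1−ρ)(1−φρ)) is monotone increasing in φ on [0,1], and its maximum over [0,1] equals ℛ_PR(1) = (Kρ² + (2−K)ρ²(1−ρ)) / (2(1−ρ)²). -/
/-!
Clearing denominators, `ℛ_PR(b) - ℛ_PR(a)` is `ρ² (b - a)` times the factor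
`K + (2 - K)(1 - ρ)(a + b - abρ)` over a positive denominator. For `a, b ∈ [0,1]` the quantity
`c = a + b - abρ` ranges over `[0, 2 - ρ]`, and the factor is affine in `c`, so it is nonnegative as
soon as it is at `c = 0` (i.e. `K ≥ 0`) and at `c = 2 - ρ` (i.e. `(K - 2)(1 - ρ)(2 - ρ) ≤ K`). Squaring
the load hypothesis turns it into exactly this last inequality.
-/

/-- The preemptive-resume revenue `ℛ_PR(φ)`. -/
noncomputable def revenuePR (K ρ φ : ℝ) : ℝ :=
  (K * φ * ρ ^ 2 + (2 - K) * φ ^ 2 * ρ ^ 2 * (1 - ρ)) / (2 * (1 - ρ) * (1 - φ * ρ))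

theorem revenuePR_one (K ρ : ℝ) :
    revenuePR K ρ 1 = (K * ρ ^ 2 + (2 - K) * ρ ^ 2 * (1 - ρ)) / (2 * (1 - ρ) ^ 2) := by
  unfold revenuePR
  ring_nf

theorem revenuePR_sub_revenuePR {K ρ a b : ℝ} (hρ : ρ ≠ 1) (ha : a * ρ ≠ 1) (hb : b * ρ ≠ 1) :
    revenuePR K ρ b - revenuePR K ρ a =
      ρ ^ 2 * (b - a) * (K + (2 - K) * (1 - ρ) * (a + b - a * b * ρ)) /
        (2 * (1 - ρ) * (1 - a * ρ) * (1 - b * ρ)) := by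
  have hρ' : 1 - ρ ≠ 0 := sub_ne_zero.2 hρ.symm
  have ha' : 1 - a * ρ ≠ 0 := sub_ne_zero.2 ha.symm
  have hb' : 1 - b * ρ ≠ 0 := sub_ne_zero.2 hb.symm
  unfold revenuePR
  rw [div_sub_div _ _ (by simp [*]) (by simp [*]), div_eq_div_iff (by simp [*]) (by simp [*])]
  ring

theorem one_sub_mul_pos {a ρ : ℝ} (ha : a ∈ Set.Icc (0 : ℝ) 1) (hρ : ρ < 1) : 0 < 1 - a * ρ := by
  obtain ⟨ha0, ha1⟩ := ha
  rcases le_or_gt ρ 0 with hρ0 | hρ0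
  · nlinarith
  · nlinarith

theorem add_sub_mul_mul_le_two_sub {a b ρ : ℝ} (ha : a ∈ Set.Icc (0 : ℝ) 1)
    (hb : b ∈ Set.Icc (0 : ℝ) 1) (hρ : ρ ≤ 1) : a + b - a * b * ρ ≤ 2 - ρ := by
  obtain ⟨ha0, ha1⟩ := ha
  obtain ⟨hb0, hb1⟩ := hb
  have hab : a * b ≤ 1 := mul_le_one₀ ha1 hb0 hb1
  have key : 2 - ρ - (a + b - a * b * ρ) = (1 - a) * (1 - b) + (1 - ρ) * (1 - a * b) := by ring
  linarith [mul_nonneg (sub_nonneg.2 ha1) (sub_nonneg.2 hb1),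
    mul_nonneg (sub_nonneg.2 hρ) (sub_nonneg.2 hab)]

theorem revenuePR_monotoneOn {K ρ : ℝ} (hρ : ρ < 1) (hK : 0 ≤ K)
    (hKρ : (K - 2) * (1 - ρ) * (2 - ρ) ≤ K) : MonotoneOn (revenuePR K ρ) (Set.Icc 0 1) := by
  intro a ha b hb hab
  have hpa := one_sub_mul_pos ha hρ
  have hpb := one_sub_mul_pos hb hρ
  have hc0 : 0 ≤ a + b - a * b * ρ := by nlinarith [mul_nonneg hb.1 hpa.le, ha.1]
  have hc1 := add_sub_mul_mul_le_two_sub ha hb hρ.le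
  -- `(2 - ρ) · factor = K (2 - ρ - c) + c (K - (K - 2)(1 - ρ)(2 - ρ))`, with `c = a + b - abρ`
  have hfactor : 0 ≤ K + (2 - K) * (1 - ρ) * (a + b - a * b * ρ) := by
    nlinarith [mul_nonneg hK (sub_nonneg.2 hc1), mul_nonneg hc0 (sub_nonneg.2 hKρ)]
  rw [← sub_nonneg, revenuePR_sub_revenuePR hρ.ne (sub_pos.1 hpa).ne (sub_pos.1 hpb).ne]
  have hden : 0 < 2 * (1 - ρ) * (1 - a * ρ) * (1 - b * ρ) := by
    have : 0 < 1 - ρ := by linarith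
    positivity
  exact div_nonneg (mul_nonneg (mul_nonneg (sq_nonneg ρ) (sub_nonneg.2 hab)) hfactor) hden.le

theorem sub_two_mul_one_sub_mul_two_sub_le {K ρ : ℝ} (hK : 2 < K) (hρ : ρ ≤ 3 / 2)
    (hρK : 3 / 2 - (1 / 2) * Real.sqrt ((5 * K - 2) / (K - 2)) ≤ ρ) :
    (K - 2) * (1 - ρ) * (2 - ρ) ≤ K := by
  have hK2 : 0 < K - 2 := by linarith
  have hsq : (3 - 2 * ρ) ^ 2 ≤ (5 * K - 2) / (K - 2) := by
    rw [← Real.sq_sqrt (div_nonneg (by linarith) hK2.le)]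
    exact pow_le_pow_left₀ (by linarith) (by linarith) 2
  rw [le_div_iff₀ hK2] at hsq
  nlinarith

theorem revenue_PR_max_Kgt4_highload_general (ρ K : ℝ) (hρ1 : ρ < 1) (hK : 4 < K)
    (hρK : 3 / 2 - (1 / 2) * Real.sqrt ((5 * K - 2) / (K - 2)) ≤ ρ) :
    MonotoneOn
      (fun φ : ℝ =>
        (K * φ * ρ ^ 2 + (2 - K) * φ ^ 2 * ρ ^ 2 * (1 - ρ)) / (2 * (1 - ρ) * (1 - φ * ρ)))
      (Set.Icc (0 : ℝ) 1) ∧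
    (∀ φ ∈ Set.Icc (0 : ℝ) 1,
      (K * φ * ρ ^ 2 + (2 - K) * φ ^ 2 * ρ ^ 2 * (1 - ρ)) / (2 * (1 - ρ) * (1 - φ * ρ)) ≤
        (K * ρ ^ 2 + (2 - K) * ρ ^ 2 * (1 - ρ)) / (2 * (1 - ρ) ^ 2)) ∧
    (K * 1 * ρ ^ 2 + (2 - K) * 1 ^ 2 * ρ ^ 2 * (1 - ρ)) / (2 * (1 - ρ) * (1 - 1 * ρ)) =
      (K * ρ ^ 2 + (2 - K) * ρ ^ 2 * (1 - ρ)) / (2 * (1 - ρ) ^ 2) := by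
  have hKρ := sub_two_mul_one_sub_mul_two_sub_le (by linarith) (by linarith) hρK
  have hmono : MonotoneOn (revenuePR K ρ) (Set.Icc 0 1) :=
    revenuePR_monotoneOn hρ1 (by linarith) hKρ
  refine ⟨hmono, fun φ hφ => ?_, revenuePR_one K ρ⟩
  rw [← revenuePR_one]
  exact hmono hφ ⟨zero_le_one, le_rfl⟩ hφ.2

/-- Let `K > 4` and `ρ ∈ (0,1)` with `ρ ≥ 3/2 − (1/2)√((5K−2)/(K−2))`.
Then `ℛ_PR` is monotone increasing on `[0,1]` and its maximum over `[0,1]` equals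
`ℛ_PR(1) = (Kρ² + (2−K)ρ²(1−ρ)) / (2(1−ρ)²)`. -/
theorem revenue_PR_max_Kgt4_highload (ρ K : ℝ) (hρ0 : 0 < ρ) (hρ1 : ρ < 1) (hK : 4 < K)
    (hρK : 3 / 2 - (1 / 2) * Real.sqrt ((5 * K - 2) / (K - 2)) ≤ ρ) :
    MonotoneOn
      (fun φ : ℝ =>
        (K * φ * ρ ^ 2 + (2 - K) * φ ^ 2 * ρ ^ 2 * (1 - ρ)) / (2 * (1 - ρ) * (1 - φ * ρ)))
      (Set.Icc (0 : ℝ) 1) ∧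
    (∀ φ ∈ Set.Icc (0 : ℝ) 1,
      (K * φ * ρ ^ 2 + (2 - K) * φ ^ 2 * ρ ^ 2 * (1 - ρ)) / (2 * (1 - ρ) * (1 - φ * ρ)) ≤
        (K * ρ ^ 2 + (2 - K) * ρ ^ 2 * (1 - ρ)) / (2 * (1 - ρ) ^ 2)) ∧
    (K * 1 * ρ ^ 2 + (2 - K) * 1 ^ 2 * ρ ^ 2 * (1 - ρ)) / (2 * (1 - ρ) * (1 - 1 * ρ)) =
      (K * ρ ^ 2 + (2 - K) * ρ ^ 2 * (1 - ρ)) / (2 * (1 - ρ) ^ 2) :=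
  revenue_PR_max_Kgt4_highload_general ρ K hρ1 hK hρK
end

section
/- Let ρ ∈ (0,1) and 2 < K ≤ 4. Then the revenue-maximizing state under the preemptive-resume policy, φ = 1 (the unique maximizer of ℛ_PR(φ) = (Kφρ² + (2−K)φ²ρ²(1−ρ)) / (2(1−ρ)(1−φρ)) over [0,1]), is a social-welfare worst case: 𝒮_PR(1) ≥ 𝒮_PR(φ) for all φ ∈ [0,1], where 𝒮_PR(φ) = ρ(K − 2φρ + (2−K)φ(1 − φ(1−ρ))) / (2μ(1−ρ)(1−φρ)) for any fixed μ > 0. -/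
/-!
Both differences against the all-premium state `φ = 1` factor in closed form:
`ℛ(1) - ℛ(φ)` is `(1 - φ) ρ² (K + (2 - K) t) / (2 (1 - ρ)² (1 - φ ρ))` with
`t = (1 - ρ)(1 + φ (1 - ρ)) ∈ (0, 2)`, and `𝒮(1) - 𝒮(φ)` is `(K - 2) ρ φ (1 - φ) / (2 μ (1 - φ ρ))`.
The first is positive for `φ < 1` as soon as `0 ≤ K ≤ 4`, the second nonnegative as soon as `K ≥ 2`.
-/

namespace PriorityQueue

noncomputable def revenuePR (ρ K φ : ℝ) : ℝ :=
  (K * φ * ρ ^ 2 + (2 - K) * φ ^ 2 * ρ ^ 2 * (1 - ρ)) / (2 * (1 - ρ) * (1 - φ * ρ))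

noncomputable def socialCostPR (μ ρ K φ : ℝ) : ℝ :=
  ρ * (K - 2 * φ * ρ + (2 - K) * φ * (1 - φ * (1 - ρ))) / (2 * μ * (1 - ρ) * (1 - φ * ρ))

variable {μ ρ K φ : ℝ}

lemma revenuePR_one_sub (hρ : ρ ≠ 1) (hφρ : φ * ρ ≠ 1) :
    revenuePR ρ K 1 - revenuePR ρ K φ =
      (1 - φ) * ρ ^ 2 * (K + (2 - K) * ((1 - ρ) * (1 + φ * (1 - ρ)))) /
        (2 * (1 - ρ) ^ 2 * (1 - φ * ρ)) := by
  have hρ' : 1 - ρ ≠ 0 := sub_ne_zero.mpr hρ.symm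
  have hφρ' : 1 - φ * ρ ≠ 0 := sub_ne_zero.mpr hφρ.symm
  unfold revenuePR
  rw [div_sub_div _ _ (by simp [hρ']) (by simp [hρ', hφρ']),
    div_eq_div_iff (by simp [hρ', hφρ']) (by simp [hρ', hφρ'])]
  ring

lemma socialCostPR_one_sub (hμ : μ ≠ 0) (hρ : ρ ≠ 1) (hφρ : φ * ρ ≠ 1) :
    socialCostPR μ ρ K 1 - socialCostPR μ ρ K φ =
      (K - 2) * ρ * φ * (1 - φ) / (2 * μ * (1 - φ * ρ)) := by
  have hρ' : 1 - ρ ≠ 0 := sub_ne_zero.mpr hρ.symm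
  have hφρ' : 1 - φ * ρ ≠ 0 := sub_ne_zero.mpr hφρ.symm
  unfold socialCostPR
  rw [div_sub_div _ _ (by simp [hμ, hρ']) (by simp [hμ, hρ', hφρ']),
    div_eq_div_iff (by simp [hμ, hρ', hφρ']) (by simp [hμ, hφρ'])]
  ring

/-- `K + (2 - K) t` is affine in `K`, and positive at both ends `K = 0` and `K = 4`. -/
lemma add_sub_mul_pos {t : ℝ} (ht0 : 0 < t) (ht2 : t < 2) (hK0 : 0 ≤ K) (hK4 : K ≤ 4) :
    0 < K + (2 - K) * t := by
  rcases le_or_gt t 1 with ht1 | ht1 <;> nlinarith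

lemma revenuePR_lt_one (hρ0 : 0 < ρ) (hρ1 : ρ < 1) (hK0 : 0 ≤ K) (hK4 : K ≤ 4)
    (hφ : φ ∈ Set.Ico 0 1) : revenuePR ρ K φ < revenuePR ρ K 1 := by
  obtain ⟨hφ0, hφ1⟩ := hφ
  have hφρ : φ * ρ < 1 := mul_lt_one_of_nonneg_of_lt_one_right hφ1.le hρ0.le hρ1
  rw [← sub_pos, revenuePR_one_sub hρ1.ne hφρ.ne]
  have hfactor : 0 < K + (2 - K) * ((1 - ρ) * (1 + φ * (1 - ρ))) :=
    add_sub_mul_pos (by nlinarith) (by nlinarith) hK0 hK4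
  have : 0 < 1 - φ := sub_pos.mpr hφ1
  have : 0 < 1 - φ * ρ := sub_pos.mpr hφρ
  positivity

lemma socialCostPR_le_one (hμ : 0 < μ) (hρ0 : 0 ≤ ρ) (hρ1 : ρ < 1) (hK : 2 ≤ K)
    (hφ : φ ∈ Set.Icc 0 1) : socialCostPR μ ρ K φ ≤ socialCostPR μ ρ K 1 := by
  obtain ⟨hφ0, hφ1⟩ := hφ
  have hφρ : φ * ρ < 1 := mul_lt_one_of_nonneg_of_lt_one_right hφ1 hρ0 hρ1
  rw [← sub_nonneg, socialCostPR_one_sub hμ.ne' hρ1.ne hφρ.ne]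
  have : 0 ≤ K - 2 := sub_nonneg.mpr hK
  have : 0 ≤ 1 - φ := sub_nonneg.mpr hφ1
  have : 0 < 1 - φ * ρ := sub_pos.mpr hφρ
  positivity

end PriorityQueue

open PriorityQueue in
/-- Let `ρ ∈ (0,1)` and `2 < K ≤ 4`. Then the revenue-maximizing state
`φ = 1` (the unique maximizer of `ℛ_PR` over `[0,1]`) is a social-welfare worst case:
`𝒮_PR(1) ≥ 𝒮_PR(φ)` for all `φ ∈ [0,1]` and any fixed `μ > 0`. -/
theorem revenue_max_is_welfare_worst (ρ K μ : ℝ) (hρ0 : 0 < ρ) (hρ1 : ρ < 1)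
    (hK2 : 2 < K) (hK4 : K ≤ 4) (hμ : 0 < μ) :
    (∀ φ ∈ Set.Icc (0 : ℝ) 1, φ ≠ 1 →
      (K * φ * ρ ^ 2 + (2 - K) * φ ^ 2 * ρ ^ 2 * (1 - ρ)) / (2 * (1 - ρ) * (1 - φ * ρ)) <
        (K * 1 * ρ ^ 2 + (2 - K) * 1 ^ 2 * ρ ^ 2 * (1 - ρ)) / (2 * (1 - ρ) * (1 - 1 * ρ))) ∧
    ∀ φ ∈ Set.Icc (0 : ℝ) 1,
      ρ * (K - 2 * φ * ρ + (2 - K) * φ * (1 - φ * (1 - ρ))) /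
          (2 * μ * (1 - ρ) * (1 - φ * ρ)) ≤
        ρ * (K - 2 * 1 * ρ + (2 - K) * 1 * (1 - 1 * (1 - ρ))) /
          (2 * μ * (1 - ρ) * (1 - 1 * ρ)) :=
  ⟨fun _ hφ hne => revenuePR_lt_one hρ0 hρ1 (by linarith) hK4 ⟨hφ.1, lt_of_le_of_ne hφ.2 hne⟩,
    fun _ hφ => socialCostPR_le_one hμ hρ0.le hρ1 hK2.le hφ⟩
end
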